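/- arXiv:2011.06338 — 2 statements merged into one kernel-verified Lean document; each statement's English description precedes it below -/
import Mathlib

section
/- There exists a group isomorphism σ from the quotient group O/Q₈ onto the symmetric group 𝔖₃ = Perm(Fin 3) such that σ sends the coset of (1+i)/√2 to the transposition s_β = (1 2) (i.e. Equiv.swap 1 2) and the coset of (1+k)/√2 to the transposition s_α = (0 1) (i.e. Equiv.swap 0 1). -/
open Quaternion Metric

noncomputable section

/-- The real quaternions. -/
abbrev H := Quaternion ℝ

/-- The group `S³` of unit quaternions. -/
abbrev S3 := Metric.sphere (0 : H) 1

lemma mem_S3 (a : H) (h : Quaternion.normSq a = 1) : a ∈ Metric.sphere (0 : H) 1 := by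
  rw [mem_sphere_zero_iff_norm]
  have h2 : ‖a‖ * ‖a‖ = 1 := by rw [← Quaternion.normSq_eq_norm_mul_self, h]
  nlinarith [norm_nonneg a]

/-- `i` as a unit quaternion. -/
def qi : S3 := ⟨⟨0,1,0,0⟩, mem_S3 _ ((Quaternion.normSq_def' _).trans (by norm_num))⟩
/-- `j` as a unit quaternion. -/
def qj : S3 := ⟨⟨0,0,1,0⟩, mem_S3 _ ((Quaternion.normSq_def' _).trans (by norm_num))⟩
/-- `k` as a unit quaternion. -/
def qk : S3 := ⟨⟨0,0,0,1⟩, mem_S3 _ ((Quaternion.normSq_def' _).trans (by norm_num))⟩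

lemma sq2 : (Real.sqrt 2)⁻¹ ^ 2 = 1/2 := by
  rw [inv_pow, Real.sq_sqrt (by norm_num : (2:ℝ) ≥ 0)]
  norm_num

/-- `τᵢ = (1+i)/√2` as a unit quaternion. -/
def τi : S3 := ⟨⟨(Real.sqrt 2)⁻¹, (Real.sqrt 2)⁻¹, 0, 0⟩,
  mem_S3 _ ((Quaternion.normSq_def' _).trans (by simp only [sq2]; norm_num))⟩
/-- `τⱼ = (1+j)/√2` as a unit quaternion. -/
def τj : S3 := ⟨⟨(Real.sqrt 2)⁻¹, 0, (Real.sqrt 2)⁻¹, 0⟩,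
  mem_S3 _ ((Quaternion.normSq_def' _).trans (by simp only [sq2]; norm_num))⟩
/-- `τₖ = (1+k)/√2` as a unit quaternion. -/
def τk : S3 := ⟨⟨(Real.sqrt 2)⁻¹, 0, 0, (Real.sqrt 2)⁻¹⟩,
  mem_S3 _ ((Quaternion.normSq_def' _).trans (by simp only [sq2]; norm_num))⟩

/-- `ω₀ = (1+i+j+k)/2` as a unit quaternion. -/
def ω0 : S3 := ⟨⟨1/2, 1/2, 1/2, 1/2⟩, mem_S3 _ ((Quaternion.normSq_def' _).trans (by norm_num))⟩
/-- `ωᵢ = (1−i+j+k)/2` as a unit quaternion. -/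
def ωi : S3 := ⟨⟨1/2, -(1/2), 1/2, 1/2⟩, mem_S3 _ ((Quaternion.normSq_def' _).trans (by norm_num))⟩
/-- `ωⱼ = (1+i−j+k)/2` as a unit quaternion. -/
def ωj : S3 := ⟨⟨1/2, 1/2, -(1/2), 1/2⟩, mem_S3 _ ((Quaternion.normSq_def' _).trans (by norm_num))⟩
/-- `ωₖ = (1+i+j−k)/2` as a unit quaternion. -/
def ωk : S3 := ⟨⟨1/2, 1/2, 1/2, -(1/2)⟩, mem_S3 _ ((Quaternion.normSq_def' _).trans (by norm_num))⟩

/-- The quaternion group `Q₈`, the subgroup of `S³` generated by `i` and `j`. -/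
def Q8 : Subgroup S3 := Subgroup.closure {qi, qj}
/-- The binary octahedral group `O`, the subgroup of `S³` generated by `(1+i)/√2` and `(1+j)/√2`. -/
def Oct : Subgroup S3 := Subgroup.closure {τi, τj}

def e : Fin 3 → H := ![⟨0,1,0,0⟩, ⟨0,0,1,0⟩, ⟨0,0,0,1⟩]

def qrel (x : H) (t t' : Fin 3) : Prop := x * e t = e t' * x ∨ x * e t = -(e t' * x)

lemma e_eq {t t' : Fin 3} (h : e t = e t' ∨ e t = - e t') : t = t' := by
  fin_cases t <;> fin_cases t' <;>
    first
      | rfl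
      | (exfalso; rcases h with h|h <;> simp only [Quaternion.ext_iff, Quaternion.re_neg, Quaternion.imI_neg, Quaternion.imJ_neg, Quaternion.imK_neg] at h <;>
          simp [e] at h)

lemma s3_ne_zero (q : S3) : (↑q : H) ≠ 0 := by
  have h : ‖(↑q : H)‖ = 1 := mem_sphere_zero_iff_norm.mp q.2
  intro h0; rw [h0] at h; simp at h

lemma qrel_unique {x : H} (hq : x ≠ 0) {t t' t'' : Fin 3} (h1 : qrel x t t') (h2 : qrel x t t'') :
    t' = t'' := by
  apply e_eq
  rcases h1 with h1|h1 <;> rcases h2 with h2|h2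
  · exact Or.inl (mul_right_cancel₀ hq (h1.symm.trans h2))
  · refine Or.inr ?_
    have h : e t' * x = -e t'' * x := by rw [neg_mul, ← h2, ← h1]
    exact mul_right_cancel₀ hq h
  · refine Or.inr ?_
    have h : e t' * x = -e t'' * x := by
      rw [neg_mul, ← neg_neg (e t' * x), ← h1, h2]
    exact mul_right_cancel₀ hq h
  · exact Or.inl (mul_right_cancel₀ hq (neg_inj.mp (h1.symm.trans h2)))

lemma qrel_uniqueL {x : H} (hq : x ≠ 0) {a b t : Fin 3} (h1 : qrel x a t) (h2 : qrel x b t) : a = b := by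
  apply e_eq
  rcases h1 with h1|h1 <;> rcases h2 with h2|h2
  · exact Or.inl (mul_left_cancel₀ hq (h1.trans h2.symm))
  · refine Or.inr ?_
    have h : x * e a = x * -e b := by rw [h1, mul_neg, h2, neg_neg]
    exact mul_left_cancel₀ hq h
  · refine Or.inr ?_
    have h : x * e a = x * -e b := by rw [h1, mul_neg, h2]
    exact mul_left_cancel₀ hq h
  · exact Or.inl (mul_left_cancel₀ hq (h1.trans h2.symm))

lemma qrel_one (t : Fin 3) : qrel 1 t t := Or.inl (by rw [one_mul, mul_one])

lemma qrel_mul {p q : H} {t s u : Fin 3} (hp : qrel p s u) (hq : qrel q t s) :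
    qrel (p * q) t u := by
  rcases hp with hp|hp <;> rcases hq with hq|hq
  · exact Or.inl (by rw [mul_assoc, hq, ← mul_assoc, hp, mul_assoc])
  · exact Or.inr (by rw [mul_assoc, hq, mul_neg, ← mul_assoc, hp, mul_assoc])
  · exact Or.inr (by rw [mul_assoc, hq, ← mul_assoc, hp, neg_mul, mul_assoc])
  · exact Or.inl (by rw [mul_assoc, hq, mul_neg, ← mul_assoc, hp, neg_mul, neg_neg, mul_assoc])

lemma qrel_inv (q : S3) {t s : Fin 3} (h : qrel ↑q t s) : qrel ↑(q⁻¹) s t := by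
  have hxy : (↑q : H) * ↑(q⁻¹) = 1 := congrArg Subtype.val (mul_inv_cancel q)
  have hyx : (↑(q⁻¹) : H) * ↑q = 1 := congrArg Subtype.val (inv_mul_cancel q)
  rcases h with h|h
  · refine Or.inl ?_
    calc ↑(q⁻¹) * e s = ↑(q⁻¹) * e s * (↑q * ↑(q⁻¹)) := by rw [hxy, mul_one]
      _ = ↑(q⁻¹) * (e s * ↑q) * ↑(q⁻¹) := by noncomm_ring
      _ = ↑(q⁻¹) * (↑q * e t) * ↑(q⁻¹) := by rw [h]
      _ = (↑(q⁻¹) * ↑q) * (e t * ↑(q⁻¹)) := by noncomm_ring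
      _ = e t * ↑(q⁻¹) := by rw [hyx, one_mul]
  · refine Or.inr ?_
    have h' : e s * ↑q = -(↑q * e t) := by rw [← neg_neg (e s * (↑q : H)), ← h]
    calc ↑(q⁻¹) * e s = ↑(q⁻¹) * e s * (↑q * ↑(q⁻¹)) := by rw [hxy, mul_one]
      _ = ↑(q⁻¹) * (e s * ↑q) * ↑(q⁻¹) := by noncomm_ring
      _ = ↑(q⁻¹) * (-(↑q * e t)) * ↑(q⁻¹) := by rw [h']
      _ = -((↑(q⁻¹) * ↑q) * (e t * ↑(q⁻¹))) := by noncomm_ring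
      _ = -(e t * ↑(q⁻¹)) := by rw [hyx, one_mul]

/-- the "monomial" subgroup of S3 where conjugation permutes the coordinate axes -/
def Mgrp : Subgroup S3 where
  carrier := {q | ∀ t, ∃ t', qrel (↑q : H) t t'}
  one_mem' := fun t => ⟨t, qrel_one t⟩
  mul_mem' := by
    intro p q hp hq t
    obtain ⟨s, hs⟩ := hq t
    obtain ⟨u, hu⟩ := hp s
    exact ⟨u, qrel_mul hu hs⟩
  inv_mem' := by
    intro q hq
    choose f hf using hq
    have hinj : Function.Injective f := fun a b hab => qrel_uniqueL (s3_ne_zero q) (hf a) (hab ▸ hf b)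
    intro t
    obtain ⟨s, hs⟩ := (Finite.injective_iff_surjective.mp hinj) t
    exact ⟨s, qrel_inv q (hs ▸ hf s)⟩

/-- the subgroup of S3 acting trivially on axes -/
def Kgrp : Subgroup S3 where
  carrier := {q | ∀ t, qrel (↑q : H) t t}
  one_mem' := fun t => qrel_one t
  mul_mem' := fun hp hq t => qrel_mul (hp t) (hq t)
  inv_mem' := fun hq t => qrel_inv _ (hq t)

lemma qrel_τi0 : qrel (↑τi : H) 0 0 := Or.inl (by ext <;> simp only [Quaternion.re_mul, Quaternion.imI_mul, Quaternion.imJ_mul, Quaternion.imK_mul, Quaternion.re_neg, Quaternion.imI_neg, Quaternion.imJ_neg, Quaternion.imK_neg] <;> simp [τi, e] <;> ring)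
lemma qrel_τi1 : qrel (↑τi : H) 1 2 := Or.inl (by ext <;> simp only [Quaternion.re_mul, Quaternion.imI_mul, Quaternion.imJ_mul, Quaternion.imK_mul, Quaternion.re_neg, Quaternion.imI_neg, Quaternion.imJ_neg, Quaternion.imK_neg] <;> simp [τi, e] <;> ring)
lemma qrel_τi2 : qrel (↑τi : H) 2 1 := Or.inr (by ext <;> simp only [Quaternion.re_mul, Quaternion.imI_mul, Quaternion.imJ_mul, Quaternion.imK_mul, Quaternion.re_neg, Quaternion.imI_neg, Quaternion.imJ_neg, Quaternion.imK_neg] <;> simp [τi, e] <;> ring)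
lemma qrel_τj0 : qrel (↑τj : H) 0 2 := Or.inr (by ext <;> simp only [Quaternion.re_mul, Quaternion.imI_mul, Quaternion.imJ_mul, Quaternion.imK_mul, Quaternion.re_neg, Quaternion.imI_neg, Quaternion.imJ_neg, Quaternion.imK_neg] <;> simp [τj, e] <;> ring)
lemma qrel_τj1 : qrel (↑τj : H) 1 1 := Or.inl (by ext <;> simp only [Quaternion.re_mul, Quaternion.imI_mul, Quaternion.imJ_mul, Quaternion.imK_mul, Quaternion.re_neg, Quaternion.imI_neg, Quaternion.imJ_neg, Quaternion.imK_neg] <;> simp [τj, e] <;> ring)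
lemma qrel_τj2 : qrel (↑τj : H) 2 0 := Or.inl (by ext <;> simp only [Quaternion.re_mul, Quaternion.imI_mul, Quaternion.imJ_mul, Quaternion.imK_mul, Quaternion.re_neg, Quaternion.imI_neg, Quaternion.imJ_neg, Quaternion.imK_neg] <;> simp [τj, e] <;> ring)
lemma qrel_τk0 : qrel (↑τk : H) 0 1 := Or.inl (by ext <;> simp only [Quaternion.re_mul, Quaternion.imI_mul, Quaternion.imJ_mul, Quaternion.imK_mul, Quaternion.re_neg, Quaternion.imI_neg, Quaternion.imJ_neg, Quaternion.imK_neg] <;> simp [τk, e] <;> ring)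
lemma qrel_τk1 : qrel (↑τk : H) 1 0 := Or.inr (by ext <;> simp only [Quaternion.re_mul, Quaternion.imI_mul, Quaternion.imJ_mul, Quaternion.imK_mul, Quaternion.re_neg, Quaternion.imI_neg, Quaternion.imJ_neg, Quaternion.imK_neg] <;> simp [τk, e] <;> ring)
lemma qrel_τk2 : qrel (↑τk : H) 2 2 := Or.inl (by ext <;> simp only [Quaternion.re_mul, Quaternion.imI_mul, Quaternion.imJ_mul, Quaternion.imK_mul, Quaternion.re_neg, Quaternion.imI_neg, Quaternion.imJ_neg, Quaternion.imK_neg] <;> simp [τk, e] <;> ring)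

lemma qi_K : qi ∈ Kgrp := by
  intro t
  fin_cases t
  · exact Or.inl (by ext <;> simp only [Quaternion.re_mul, Quaternion.imI_mul, Quaternion.imJ_mul, Quaternion.imK_mul, Quaternion.re_neg, Quaternion.imI_neg, Quaternion.imJ_neg, Quaternion.imK_neg] <;> simp [qi, e])
  · exact Or.inr (by ext <;> simp only [Quaternion.re_mul, Quaternion.imI_mul, Quaternion.imJ_mul, Quaternion.imK_mul, Quaternion.re_neg, Quaternion.imI_neg, Quaternion.imJ_neg, Quaternion.imK_neg] <;> simp [qi, e])
  · exact Or.inr (by ext <;> simp only [Quaternion.re_mul, Quaternion.imI_mul, Quaternion.imJ_mul, Quaternion.imK_mul, Quaternion.re_neg, Quaternion.imI_neg, Quaternion.imJ_neg, Quaternion.imK_neg] <;> simp [qi, e])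

lemma qj_K : qj ∈ Kgrp := by
  intro t
  fin_cases t
  · exact Or.inr (by ext <;> simp only [Quaternion.re_mul, Quaternion.imI_mul, Quaternion.imJ_mul, Quaternion.imK_mul, Quaternion.re_neg, Quaternion.imI_neg, Quaternion.imJ_neg, Quaternion.imK_neg] <;> simp [qj, e])
  · exact Or.inl (by ext <;> simp only [Quaternion.re_mul, Quaternion.imI_mul, Quaternion.imJ_mul, Quaternion.imK_mul, Quaternion.re_neg, Quaternion.imI_neg, Quaternion.imJ_neg, Quaternion.imK_neg] <;> simp [qj, e])
  · exact Or.inr (by ext <;> simp only [Quaternion.re_mul, Quaternion.imI_mul, Quaternion.imJ_mul, Quaternion.imK_mul, Quaternion.re_neg, Quaternion.imI_neg, Quaternion.imJ_neg, Quaternion.imK_neg] <;> simp [qj, e])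

lemma hQ8K : Q8 ≤ Kgrp := by
  rw [Q8]
  apply (Subgroup.closure_le _).mpr
  intro x hx
  rcases hx with h | h
  · exact h ▸ qi_K
  · exact (Set.mem_singleton_iff.mp h) ▸ qj_K

lemma hOctM : Oct ≤ Mgrp := by
  rw [Oct]
  apply (Subgroup.closure_le _).mpr
  intro x hx
  rcases hx with h | h
  · subst h; intro t; fin_cases t
    exacts [⟨0, qrel_τi0⟩, ⟨2, qrel_τi1⟩, ⟨1, qrel_τi2⟩]
  · rw [Set.mem_singleton_iff] at h; subst h; intro t; fin_cases t
    exacts [⟨2, qrel_τj0⟩, ⟨1, qrel_τj1⟩, ⟨0, qrel_τj2⟩]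

def φfun (x : H) (t : Fin 3) : Fin 3 :=
  @dite _ (∃ t', qrel x t t') (Classical.dec _) (fun h => h.choose) (fun _ => t)

lemma φfun_eq {x : H} (hx : x ≠ 0) {t t' : Fin 3} (h : qrel x t t') : φfun x t = t' := by
  have he : ∃ s, qrel x t s := ⟨t', h⟩
  simp only [φfun]
  rw [dif_pos he]
  exact qrel_unique hx he.choose_spec h

lemma φfun_bij (q : S3) (hq : q ∈ Mgrp) : Function.Bijective (φfun (↑q : H)) := by
  rw [← Finite.injective_iff_bijective]
  intro a b hab
  obtain ⟨ta, ha⟩ := hq a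
  obtain ⟨tb, hb⟩ := hq b
  rw [φfun_eq (s3_ne_zero q) ha, φfun_eq (s3_ne_zero q) hb] at hab
  exact qrel_uniqueL (s3_ne_zero q) ha (hab ▸ hb)

lemma φfun_one (t : Fin 3) : φfun ((1 : S3) : H) t = t := φfun_eq one_ne_zero (qrel_one t)

lemma φfun_mul (p q : Oct) (t : Fin 3) :
    φfun ((↑↑(p*q) : H)) t = φfun (↑↑p : H) (φfun (↑↑q : H) t) := by
  obtain ⟨s, hs⟩ := hOctM q.2 t
  obtain ⟨u, hu⟩ := hOctM p.2 s
  have hne : (↑↑p : H) * ↑↑q ≠ 0 := mul_ne_zero (s3_ne_zero ↑p) (s3_ne_zero ↑q)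
  rw [show φfun (↑↑q : H) t = s from φfun_eq (s3_ne_zero ↑q) hs,
      show φfun (↑↑p : H) s = u from φfun_eq (s3_ne_zero ↑p) hu]
  show φfun ((↑↑p : H) * ↑↑q) t = u
  exact φfun_eq hne (qrel_mul hu hs)

def φaux (q : Oct) : Equiv.Perm (Fin 3) :=
  Equiv.ofBijective (φfun (↑↑q : H)) (φfun_bij _ (hOctM q.2))

def φ : Oct →* Equiv.Perm (Fin 3) :=
  MonoidHom.mk' φaux (fun p q => Equiv.ext fun t => φfun_mul p q t)

lemma φ_apply (q : Oct) (t : Fin 3) : φ q t = φfun (↑↑q : H) t := rfl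


lemma hqiQ8 : qi ∈ Q8 := Subgroup.subset_closure (Or.inl rfl)
lemma hqjQ8 : qj ∈ Q8 := Subgroup.subset_closure (Or.inr rfl)
lemma hτiOct : τi ∈ Oct := Subgroup.subset_closure (Or.inl rfl)
lemma hτjOct : τj ∈ Oct := Subgroup.subset_closure (Or.inr rfl)

lemma φ_τi (h : τi ∈ Oct) : φ ⟨τi, h⟩ = Equiv.swap 1 2 := by
  apply Equiv.ext
  intro t
  rw [φ_apply]
  fin_cases t
  · show φfun (↑τi : H) 0 = 0
    exact φfun_eq (s3_ne_zero τi) qrel_τi0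
  · show φfun (↑τi : H) 1 = 2
    exact φfun_eq (s3_ne_zero τi) qrel_τi1
  · show φfun (↑τi : H) 2 = 1
    exact φfun_eq (s3_ne_zero τi) qrel_τi2

lemma φ_τj (h : τj ∈ Oct) : φ ⟨τj, h⟩ = Equiv.swap 0 2 := by
  apply Equiv.ext
  intro t
  rw [φ_apply]
  fin_cases t
  · show φfun (↑τj : H) 0 = 2
    exact φfun_eq (s3_ne_zero τj) qrel_τj0
  · show φfun (↑τj : H) 1 = 1
    exact φfun_eq (s3_ne_zero τj) qrel_τj1
  · show φfun (↑τj : H) 2 = 0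
    exact φfun_eq (s3_ne_zero τj) qrel_τj2

lemma φ_τk (h : τk ∈ Oct) : φ ⟨τk, h⟩ = Equiv.swap 0 1 := by
  apply Equiv.ext
  intro t
  rw [φ_apply]
  fin_cases t
  · show φfun (↑τk : H) 0 = 1
    exact φfun_eq (s3_ne_zero τk) qrel_τk0
  · show φfun (↑τk : H) 1 = 0
    exact φfun_eq (s3_ne_zero τk) qrel_τk1
  · show φfun (↑τk : H) 2 = 2
    exact φfun_eq (s3_ne_zero τk) qrel_τk2

lemma rel00_pos {x : H} (h : x * e 0 = e 0 * x) : x.imJ = 0 ∧ x.imK = 0 := by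
  rw [Quaternion.ext_iff] at h
  simp only [Quaternion.re_mul, Quaternion.imI_mul, Quaternion.imJ_mul, Quaternion.imK_mul, Quaternion.re_neg, Quaternion.imI_neg, Quaternion.imJ_neg, Quaternion.imK_neg] at h <;> simp [e] at h
  constructor <;> linarith [h.1, h.2]

lemma rel00_neg {x : H} (h : x * e 0 = -(e 0 * x)) : x.re = 0 ∧ x.imI = 0 := by
  rw [Quaternion.ext_iff] at h
  simp only [Quaternion.re_mul, Quaternion.imI_mul, Quaternion.imJ_mul, Quaternion.imK_mul, Quaternion.re_neg, Quaternion.imI_neg, Quaternion.imJ_neg, Quaternion.imK_neg] at h <;> simp [e] at h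
  constructor <;> linarith [h.1, h.2]

lemma rel11_pos {x : H} (h : x * e 1 = e 1 * x) : x.imI = 0 ∧ x.imK = 0 := by
  rw [Quaternion.ext_iff] at h
  simp only [Quaternion.re_mul, Quaternion.imI_mul, Quaternion.imJ_mul, Quaternion.imK_mul, Quaternion.re_neg, Quaternion.imI_neg, Quaternion.imJ_neg, Quaternion.imK_neg] at h <;> simp [e] at h
  constructor <;> linarith [h.1, h.2]

lemma rel11_neg {x : H} (h : x * e 1 = -(e 1 * x)) : x.re = 0 ∧ x.imJ = 0 := by
  rw [Quaternion.ext_iff] at h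
  simp only [Quaternion.re_mul, Quaternion.imI_mul, Quaternion.imJ_mul, Quaternion.imK_mul, Quaternion.re_neg, Quaternion.imI_neg, Quaternion.imJ_neg, Quaternion.imK_neg] at h <;> simp [e] at h
  constructor <;> linarith [h.1, h.2]

lemma φ_ker : φ.ker = Q8.subgroupOf Oct := by
  ext q
  rw [MonoidHom.mem_ker, Subgroup.mem_subgroupOf]
  constructor
  · intro h
    have hrel : ∀ t, qrel (↑↑q : H) t t := by
      intro t
      obtain ⟨t', ht'⟩ := hOctM q.2 t
      have h1 : φfun (↑↑q : H) t = t' := φfun_eq (s3_ne_zero ↑q) ht'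
      have h2 : φ q t = (1 : Equiv.Perm (Fin 3)) t := by rw [h]
      rw [φ_apply] at h2
      simp only [Equiv.Perm.one_apply] at h2
      rwa [h1.symm.trans h2] at ht'
    have hn : (↑↑q : H).re^2 + (↑↑q : H).imI^2 + (↑↑q : H).imJ^2 + (↑↑q : H).imK^2 = 1 := by
      have h1 : ‖(↑↑q : H)‖ = 1 := mem_sphere_zero_iff_norm.mp (q : S3).2
      have h2 : normSq (↑↑q : H) = 1 := by rw [normSq_eq_norm_mul_self, h1, one_mul]
      rw [Quaternion.normSq_def'] at h2
      linarith [h2]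
    have h0 := hrel 0
    have h1 := hrel 1
    rcases h0 with h0|h0 <;> rcases h1 with h1|h1
    · obtain ⟨hc, hd⟩ := rel00_pos h0
      obtain ⟨hb, -⟩ := rel11_pos h1
      have ha : ((↑↑q : H).re - 1) * ((↑↑q : H).re + 1) = 0 := by nlinarith [hn]
      rcases mul_eq_zero.mp ha with ha|ha
      · have hq : (↑q : S3) = 1 := Subtype.ext (by
          ext <;> simp <;> linarith)
        rw [hq]; exact one_mem _
      · have hq : (↑q : S3) = qi * qi := Subtype.ext (by
          apply Quaternion.ext <;> simp only [Metric.unitSphere.coe_mul, Quaternion.re_mul, Quaternion.imI_mul, Quaternion.imJ_mul, Quaternion.imK_mul, Quaternion.re_neg, Quaternion.imI_neg, Quaternion.imJ_neg, Quaternion.imK_neg] <;> simp [qi] <;> linarith)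
        rw [hq]; exact mul_mem hqiQ8 hqiQ8
    · obtain ⟨hc, hd⟩ := rel00_pos h0
      obtain ⟨ha, -⟩ := rel11_neg h1
      have hb : ((↑↑q : H).imI - 1) * ((↑↑q : H).imI + 1) = 0 := by nlinarith [hn]
      rcases mul_eq_zero.mp hb with hb|hb
      · have hq : (↑q : S3) = qi := Subtype.ext (by
          ext <;> simp [qi] <;> linarith)
        rw [hq]; exact hqiQ8
      · have hq : (↑q : S3) = qi * qi * qi := Subtype.ext (by
          apply Quaternion.ext <;> simp only [Metric.unitSphere.coe_mul, Quaternion.re_mul, Quaternion.imI_mul, Quaternion.imJ_mul, Quaternion.imK_mul, Quaternion.re_neg, Quaternion.imI_neg, Quaternion.imJ_neg, Quaternion.imK_neg] <;> simp [qi] <;> linarith)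
        rw [hq]; exact mul_mem (mul_mem hqiQ8 hqiQ8) hqiQ8
    · obtain ⟨ha, hb⟩ := rel00_neg h0
      obtain ⟨-, hd⟩ := rel11_pos h1
      have hc : ((↑↑q : H).imJ - 1) * ((↑↑q : H).imJ + 1) = 0 := by nlinarith [hn]
      rcases mul_eq_zero.mp hc with hc|hc
      · have hq : (↑q : S3) = qj := Subtype.ext (by
          ext <;> simp [qj] <;> linarith)
        rw [hq]; exact hqjQ8
      · have hq : (↑q : S3) = qi * qi * qj := Subtype.ext (by
          apply Quaternion.ext <;> simp only [Metric.unitSphere.coe_mul, Quaternion.re_mul, Quaternion.imI_mul, Quaternion.imJ_mul, Quaternion.imK_mul, Quaternion.re_neg, Quaternion.imI_neg, Quaternion.imJ_neg, Quaternion.imK_neg] <;> simp [qi, qj] <;> linarith)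
        rw [hq]; exact mul_mem (mul_mem hqiQ8 hqiQ8) hqjQ8
    · obtain ⟨ha, hb⟩ := rel00_neg h0
      obtain ⟨-, hc⟩ := rel11_neg h1
      have hd : ((↑↑q : H).imK - 1) * ((↑↑q : H).imK + 1) = 0 := by nlinarith [hn]
      rcases mul_eq_zero.mp hd with hd|hd
      · have hq : (↑q : S3) = qi * qj := Subtype.ext (by
          apply Quaternion.ext <;> simp only [Metric.unitSphere.coe_mul, Quaternion.re_mul, Quaternion.imI_mul, Quaternion.imJ_mul, Quaternion.imK_mul, Quaternion.re_neg, Quaternion.imI_neg, Quaternion.imJ_neg, Quaternion.imK_neg] <;> simp [qi, qj] <;> linarith)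
        rw [hq]; exact mul_mem hqiQ8 hqjQ8
      · have hq : (↑q : S3) = qj * qi := Subtype.ext (by
          apply Quaternion.ext <;> simp only [Metric.unitSphere.coe_mul, Quaternion.re_mul, Quaternion.imI_mul, Quaternion.imJ_mul, Quaternion.imK_mul, Quaternion.re_neg, Quaternion.imI_neg, Quaternion.imJ_neg, Quaternion.imK_neg] <;> simp [qi, qj] <;> linarith)
        rw [hq]; exact mul_mem hqjQ8 hqiQ8
  · intro h
    apply Equiv.ext
    intro t
    rw [φ_apply, φfun_eq (s3_ne_zero ↑q) (hQ8K h t)]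
    rfl

/-- There is a group isomorphism `σ : O/Q₈ ≃* 𝔖₃` sending the coset of
`(1+i)/√2` to the transposition `(1 2)` and the coset of `(1+k)/√2` to the transposition
`(0 1)`.  (The memberships `τᵢ ∈ O`, `τₖ ∈ O` and the normality of `Q₈` in `O` are facts,
here taken as hypotheses.) -/
theorem stmt1 [hN : (Q8.subgroupOf Oct).Normal]
    (hτi : τi ∈ Oct) (hτk : τk ∈ Oct) :
    ∃ σ : (Oct ⧸ Q8.subgroupOf Oct) ≃* Equiv.Perm (Fin 3),
      σ (QuotientGroup.mk ⟨τi, hτi⟩) = Equiv.swap 1 2 ∧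
      σ (QuotientGroup.mk ⟨τk, hτk⟩) = Equiv.swap 0 1 := by
  have hcond : ∀ x ∈ Q8.subgroupOf Oct, φ x = 1 := by
    intro x hx
    exact MonoidHom.mem_ker.mp (by rw [φ_ker]; exact hx)
  let f : (Oct ⧸ Q8.subgroupOf Oct) →* Equiv.Perm (Fin 3) :=
    QuotientGroup.lift (Q8.subgroupOf Oct) φ hcond
  have hf_mk : ∀ x : Oct, f (QuotientGroup.mk x) = φ x := fun x => rfl
  have hinj : Function.Injective f := by
    refine (injective_iff_map_eq_one f).mpr ?_
    intro y hy
    induction y using QuotientGroup.induction_on with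
    | H x =>
      rw [hf_mk] at hy
      rw [QuotientGroup.eq_one_iff]
      rw [← φ_ker]
      exact MonoidHom.mem_ker.mpr hy
  have hsurj : Function.Surjective f := by
    intro p
    have hdec := (by decide :
      ∀ p : Equiv.Perm (Fin 3), p = 1 ∨ p = Equiv.swap 0 1 ∨ p = Equiv.swap 0 2 ∨
        p = Equiv.swap 1 2 ∨ p = Equiv.swap 0 1 * Equiv.swap 1 2 ∨
        p = Equiv.swap 1 2 * Equiv.swap 0 1) p
    rcases hdec with h|h|h|h|h|h
    · exact ⟨QuotientGroup.mk (1 : Oct), by rw [hf_mk, map_one, h]⟩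
    · exact ⟨QuotientGroup.mk ⟨τk, hτk⟩, by rw [hf_mk, φ_τk, h]⟩
    · exact ⟨QuotientGroup.mk ⟨τj, hτjOct⟩, by rw [hf_mk, φ_τj, h]⟩
    · exact ⟨QuotientGroup.mk ⟨τi, hτi⟩, by rw [hf_mk, φ_τi, h]⟩
    · refine ⟨QuotientGroup.mk (⟨τk, hτk⟩ * ⟨τi, hτi⟩), ?_⟩
      rw [hf_mk, map_mul, φ_τk, φ_τi, h]
    · refine ⟨QuotientGroup.mk (⟨τi, hτi⟩ * ⟨τk, hτk⟩), ?_⟩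
      rw [hf_mk, map_mul, φ_τi, φ_τk, h]
  refine ⟨MulEquiv.ofBijective f ⟨hinj, hsurj⟩, ?_, ?_⟩
  · show f (QuotientGroup.mk ⟨τi, hτi⟩) = Equiv.swap 1 2
    rw [hf_mk, φ_τi]
  · show f (QuotientGroup.mk ⟨τk, hτk⟩) = Equiv.swap 0 1
    rw [hf_mk, φ_τk]

end
end

section
/- Let R ∈ SO₃(ℝ) with −1 < trace(R) < 3, and set θ := arccos((trace(R) − 1)/2), so that 0 < θ < π. Then the skew-symmetric matrix X := (θ/(2 sin θ))·(R − Rᵀ) satisfies exp(X) = R (the matrix logarithm of a rotation of angle θ ≠ 0, π). -/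
/-!
For `R ∈ SO₃(ℝ)` with trace `t`, Cayley–Hamilton in the form
`adj R = R² - t R + (tr adj R) 1`, together with `adj R = Rᵀ`, gives `R² = Rᵀ + t R - t`.
Hence `S := R - Rᵀ` satisfies `S³ = (t + 1)(t - 3) S = -4 sin² θ • S`, so
`X := θ / (2 sin θ) • S` satisfies `X³ = -θ² X`. For such `X` the exponential series splits
into its odd and even parts, which are the sine and cosine series, giving Rodrigues' formula
`exp X = 1 + (sin θ / θ) X + ((1 - cos θ) / θ²) X²`; substituting `S²` evaluates this to `R`.
-/

open Matrix NormedSpace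

section CubeRelation

variable {𝔸 : Type*} [Ring 𝔸] [Algebra ℝ 𝔸] {A : 𝔸} {c : ℝ}

theorem pow_two_mul_add_one_of_mul_mul_self (h : A * A * A = c • A) (k : ℕ) :
    A ^ (2 * k + 1) = c ^ k • A := by
  induction k with
  | zero => simp
  | succ k ih =>
    rw [show 2 * (k + 1) + 1 = 2 * k + 1 + 1 + 1 by ring, pow_succ, pow_succ, ih,
      smul_mul_assoc, smul_mul_assoc, h, smul_smul, pow_succ]

theorem pow_two_mul_add_two_of_mul_mul_self (h : A * A * A = c • A) (k : ℕ) :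
    A ^ (2 * k + 2) = c ^ k • (A * A) := by
  rw [pow_succ, pow_two_mul_add_one_of_mul_mul_self h, smul_mul_assoc]

end CubeRelation

theorem exp_eq_of_mul_mul_self_eq_neg_sq_smul {𝔸 : Type*} [Ring 𝔸] [Algebra ℝ 𝔸]
    [TopologicalSpace 𝔸] [IsTopologicalRing 𝔸] [ContinuousSMul ℝ 𝔸] [T2Space 𝔸]
    {A : 𝔸} {θ : ℝ} (hθ : θ ≠ 0) (h : A * A * A = (-θ ^ 2) • A) :
    exp A = 1 + (Real.sin θ / θ) • A + ((1 - Real.cos θ) / θ ^ 2) • (A * A) := by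
  have hneg_pow (k : ℕ) : (-θ ^ 2) ^ k = (-1) ^ k * θ ^ (2 * k) := by
    rw [neg_pow, pow_mul]
  have hodd : HasSum (fun k ↦ ((2 * k + 1).factorial⁻¹ : ℝ) • A ^ (2 * k + 1))
      ((Real.sin θ / θ) • A) := by
    convert ((Real.hasSum_sin θ).div_const θ).smul_const A using 2 with k
    rw [pow_two_mul_add_one_of_mul_mul_self h, smul_smul, hneg_pow, pow_succ]
    congr 1
    field_simp
  have heven : HasSum (fun k ↦ ((2 * (k + 1)).factorial⁻¹ : ℝ) • A ^ (2 * (k + 1)))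
      (((1 - Real.cos θ) / θ ^ 2) • (A * A)) := by
    have hcos := (hasSum_nat_add_iff' 1).mpr (Real.hasSum_cos θ)
    convert (hcos.div_const (-θ ^ 2)).smul_const (A * A) using 2 with k
    · rw [mul_add_one, pow_two_mul_add_two_of_mul_mul_self h, smul_smul, hneg_pow]
      congr 1
      rw [pow_succ (-1 : ℝ), pow_add θ]
      field_simp
    · rw [Finset.sum_range_one, div_neg, ← neg_div]
      norm_num
  have heven' : HasSum (fun k ↦ ((2 * k).factorial⁻¹ : ℝ) • A ^ (2 * k))
      (1 + ((1 - Real.cos θ) / θ ^ 2) • (A * A)) := by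
    rw [← hasSum_nat_add_iff' 1]
    simpa using heven
  rw [exp_eq_tsum ℝ]
  beta_reduce
  rw [(HasSum.even_add_odd (f := fun n ↦ (n.factorial⁻¹ : ℝ) • A ^ n) heven' hodd).tsum_eq]
  abel

namespace Matrix

variable {α : Type*} [CommRing α]

theorem adjugate_fin_three_eq (A : Matrix (Fin 3) (Fin 3) α) :
    adjugate A = A * A - trace A • A + trace (adjugate A) • 1 := by
  ext i j
  fin_cases i <;> fin_cases j <;>
    simp [adjugate_fin_three, trace_fin_three, mul_apply, Fin.sum_univ_three] <;> ring

theorem adjugate_eq_transpose_of_mem_specialOrthogonalGroup {n : Type*} [Fintype n]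
    [DecidableEq n] {R : Matrix n n α} (hR : R ∈ specialOrthogonalGroup n α) :
    adjugate R = Rᵀ := by
  obtain ⟨hRo, hdet⟩ := mem_specialOrthogonalGroup_iff.mp hR
  calc adjugate R = adjugate R * R * Rᵀ := by
        rw [mul_assoc, (mem_orthogonalGroup_iff n α).mp hRo, mul_one]
    _ = Rᵀ := by rw [adjugate_mul, hdet, one_smul, one_mul]

variable {R : Matrix (Fin 3) (Fin 3) α} (hR : R ∈ specialOrthogonalGroup (Fin 3) α)
include hR

theorem mul_self_eq_of_mem_specialOrthogonalGroup_fin_three :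
    R * R = Rᵀ + trace R • R - trace R • 1 := by
  have h := adjugate_fin_three_eq R
  rw [adjugate_eq_transpose_of_mem_specialOrthogonalGroup hR, trace_transpose] at h
  rw [h]
  abel

theorem transpose_mul_self_eq_of_mem_specialOrthogonalGroup_fin_three :
    Rᵀ * Rᵀ = R + trace R • Rᵀ - trace R • 1 := by
  simpa [← transpose_mul] using
    congrArg transpose (mul_self_eq_of_mem_specialOrthogonalGroup_fin_three hR)

theorem sub_transpose_mul_self_of_mem_specialOrthogonalGroup_fin_three :
    (R - Rᵀ) * (R - Rᵀ) = (trace R + 1) • (R + Rᵀ) - (2 * (trace R + 1)) • 1 := by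
  have hRRt := (mem_orthogonalGroup_iff _ α).mp hR.1
  have hRtR := (mem_orthogonalGroup_iff' _ α).mp hR.1
  have hRR := mul_self_eq_of_mem_specialOrthogonalGroup_fin_three hR
  have hRtRt := transpose_mul_self_eq_of_mem_specialOrthogonalGroup_fin_three hR
  rw [sub_mul, mul_sub, mul_sub, hRR, hRtRt, hRRt, hRtR]
  module

theorem sub_transpose_mul_self_mul_self_of_mem_specialOrthogonalGroup_fin_three :
    (R - Rᵀ) * (R - Rᵀ) * (R - Rᵀ) = ((trace R + 1) * (trace R - 3)) • (R - Rᵀ) := by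
  have hRRt := (mem_orthogonalGroup_iff _ α).mp hR.1
  have hRtR := (mem_orthogonalGroup_iff' _ α).mp hR.1
  rw [sub_transpose_mul_self_of_mem_specialOrthogonalGroup_fin_three hR, sub_mul,
    smul_mul_assoc, smul_mul_assoc, one_mul, add_mul, mul_sub, mul_sub, hRRt, hRtR,
    mul_self_eq_of_mem_specialOrthogonalGroup_fin_three hR,
    transpose_mul_self_eq_of_mem_specialOrthogonalGroup_fin_three hR]
  module

end Matrix

theorem Matrix.exp_smul_sub_transpose_of_mem_specialOrthogonalGroup_fin_three
    {R : Matrix (Fin 3) (Fin 3) ℝ} (hR : R ∈ specialOrthogonalGroup (Fin 3) ℝ) {θ : ℝ}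
    (hθ₀ : 0 < θ) (hθπ : θ < Real.pi) (hcos : Real.cos θ = (trace R - 1) / 2) :
    exp ((θ / (2 * Real.sin θ)) • (R - Rᵀ)) = R := by
  have hsin : 0 < Real.sin θ := Real.sin_pos_of_pos_of_lt_pi hθ₀ hθπ
  have htrace : trace R = 2 * Real.cos θ + 1 := by linarith
  have hsin_sq := Real.sin_sq_add_cos_sq θ
  set μ := θ / (2 * Real.sin θ) with hμ
  have hμ_sq : μ ^ 2 * (4 * Real.sin θ ^ 2) = θ ^ 2 := by
    rw [hμ]
    field_simp
    ring
  have hcube : μ • (R - Rᵀ) * μ • (R - Rᵀ) * μ • (R - Rᵀ) = (-θ ^ 2) • μ • (R - Rᵀ) := by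
    rw [smul_mul_smul_comm, smul_mul_smul_comm,
      sub_transpose_mul_self_mul_self_of_mem_specialOrthogonalGroup_fin_three hR, smul_smul,
      smul_smul, htrace]
    congr 1
    linear_combination (-μ) * hμ_sq + 4 * μ ^ 3 * hsin_sq
  have hlin : Real.sin θ / θ * μ = 1 / 2 := by
    rw [hμ]
    field_simp
  have hquad : (1 - Real.cos θ) / θ ^ 2 * (μ * μ) * (2 * Real.cos θ + 2) = 1 / 2 := by
    rw [hμ]
    field_simp
    linear_combination -hsin_sq
  rw [exp_eq_of_mul_mul_self_eq_neg_sq_smul hθ₀.ne' hcube, smul_mul_smul_comm,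
    sub_transpose_mul_self_of_mem_specialOrthogonalGroup_fin_three hR, htrace]
  match_scalars
  · linear_combination (-2) * hquad
  · linear_combination hlin + hquad
  · linear_combination hquad - hlin

/-- If `R ∈ SO₃(ℝ)` with `−1 < trace R < 3` and
`θ := arccos((trace R − 1)/2)`, then `0 < θ < π` and the skew-symmetric matrix
`X := (θ/(2 sin θ))·(R − Rᵀ)` satisfies `exp(X) = R`. -/
theorem stmt13 (R : Matrix (Fin 3) (Fin 3) ℝ)
    (hR : R ∈ Matrix.specialOrthogonalGroup (Fin 3) ℝ)
    (h1 : -1 < Matrix.trace R) (h3 : Matrix.trace R < 3) :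
    0 < Real.arccos ((Matrix.trace R - 1) / 2) ∧
    Real.arccos ((Matrix.trace R - 1) / 2) < Real.pi ∧
    NormedSpace.exp
        ((Real.arccos ((Matrix.trace R - 1) / 2) /
            (2 * Real.sin (Real.arccos ((Matrix.trace R - 1) / 2)))) • (R - Rᵀ))
      = R := by
  have hlt : (trace R - 1) / 2 < 1 := by linarith
  have hgt : -1 < (trace R - 1) / 2 := by linarith
  have hθ₀ := Real.arccos_pos.mpr hlt
  have hθπ := Real.arccos_lt_pi.mpr hgt
  exact ⟨hθ₀, hθπ, exp_smul_sub_transpose_of_mem_specialOrthogonalGroup_fin_three hR hθ₀ hθπ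
    (Real.cos_arccos hgt.le hlt.le)⟩
end
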